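/- arXiv:1303.2092 — 3 statements merged into one kernel-verified Lean document; each statement's English description precedes it below -/
import Mathlib

section
/- Let $K_1, K_2$ be convex bodies in $\mathbb{R}^d$ with $K_1 \subset x_1 + r_1 B^d$ and $K_2 \subset x_2 + r_2 B^d$ for some points $x_1, x_2 \in \mathbb{R}^d$ and radii $r_1, r_2 \ge 0$, where $B^d$ is the closed unit ball. Then for all $r \ge 0$ and $0 \le s \le t$, the volume difference satisfies $V_d(rK_1 + tK_2) - V_d(rK_1 + sK_2) \le \max_{1 \le i \le d}(t^i - s^i) \cdot \sum_{j=0}^{d-1} \kappa_d \binom{d}{j} r^j r_1^j r_2^{d-j}$, where $\kappa_d$ is the volume of $B^d$ and $rK_1 + tK_2$ denotes the Minkowski sum of the scaled bodies. -/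
/-!
Put `A = r K₁ + s K₂`. Then `r K₁ + t K₂ = A + (t - s) K₂` lies in a translate of the parallel
body `A + (t - s) r₂ B`, and `A` lies in the ball of radius `R = r r₁ + s r₂` about
`r x₁ + s x₂`. Parallel volume grows no faster for a convex body than for a larger set: the map
`z ↦ z + h ν(z)`, with `ν` the unit outer normal given by the nearest-point map onto `A`,
sends `Y \ A` expansively into `(Y + h B) \ (A + h B)`. With `Y` the ball this gives
`V(A + hB) - V(A) ≤ κ_d ((R + h)^d - R^d)`, and for `h = (t - s) r₂` the binomial expansion of
the right-hand side is bounded term by term by the claimed sum.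
-/

open Pointwise MeasureTheory Metric Set Module RealInnerProductSpace
open scoped NNReal ENNReal

theorem MeasureTheory.Measure.addHaar_le_mul_addHaar_image {E : Type*} [NormedAddCommGroup E]
    [NormedSpace ℝ E] [FiniteDimensional ℝ E] [MeasurableSpace E] [BorelSpace E]
    (μ : Measure E) [μ.IsAddHaarMeasure] {T : E → E} {K : ℝ≥0} (hT : AntilipschitzWith K T)
    (s : Set E) : μ s ≤ (K : ℝ≥0∞) ^ finrank ℝ E * μ (T '' s) := by
  have hH := hT.le_hausdorffMeasure_image (d := finrank ℝ E) (Nat.cast_nonneg _) s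
  rw [ENNReal.rpow_natCast] at hH
  rw [Measure.isAddLeftInvariant_eq_smul μ μH[finrank ℝ E]]
  simp only [Measure.smul_apply, ENNReal.smul_def, smul_eq_mul]
  calc _ ≤ _ * ((K : ℝ≥0∞) ^ finrank ℝ E * μH[finrank ℝ E] (T '' s)) := by gcongr
    _ = _ := mul_left_comm _ _ _

section NearestPoint

variable {E : Type*} [NormedAddCommGroup E] [InnerProductSpace ℝ E]

/-- The nearest-point map onto `X`, in its variational form (equivalent for convex `X`). -/
def IsMetricProjection (X : Set E) (P : E → E) : Prop :=
  ∀ z, P z ∈ X ∧ ∀ w ∈ X, ⟪z - P z, w - P z⟫ ≤ 0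

theorem exists_isMetricProjection {X : Set E} (hne : X.Nonempty) (hc : IsComplete X)
    (hconv : Convex ℝ X) : ∃ P, IsMetricProjection X P := by
  choose P hPX hP using exists_norm_eq_iInf_of_complete_convex hne hc hconv
  exact ⟨P, fun z => ⟨hPX z, (norm_eq_iInf_iff_real_inner_le_zero hconv (hPX z)).1 (hP z)⟩⟩

/-- Vanishes when `z = P z` (as `‖0‖⁻¹ = 0`), which lets most lemmas below hold for every `z`. -/
noncomputable def unitNormal (P : E → E) (z : E) : E := ‖z - P z‖⁻¹ • (z - P z)

variable {X : Set E} {P : E → E}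

theorem norm_unitNormal_le_one (P : E → E) (z : E) : ‖unitNormal P z‖ ≤ 1 := by
  rw [unitNormal, norm_smul, norm_inv, norm_norm]
  exact inv_mul_le_one

theorem norm_smul_unitNormal (P : E → E) (z : E) : ‖z - P z‖ • unitNormal P z = z - P z := by
  rcases eq_or_ne ‖z - P z‖ 0 with h | h
  · rw [h, zero_smul, eq_comm, ← norm_eq_zero, h]
  · exact smul_inv_smul₀ h _

theorem inner_unitNormal_self (P : E → E) (z : E) : ⟪unitNormal P z, z - P z⟫ = ‖z - P z‖ := by
  rw [unitNormal, real_inner_smul_left, real_inner_self_eq_norm_sq]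
  rcases eq_or_ne ‖z - P z‖ 0 with h | h
  · simp [h]
  · field_simp

theorem IsMetricProjection.inner_unitNormal_nonpos (hP : IsMetricProjection X P) (z : E)
    {w : E} (hw : w ∈ X) : ⟪unitNormal P z, w - P z⟫ ≤ 0 := by
  rw [unitNormal, real_inner_smul_left]
  exact mul_nonpos_of_nonneg_of_nonpos (by positivity) ((hP z).2 w hw)

/-- Monotonicity of the normal map: writing `z = P z + δ ν`, the projections contribute
nonnegatively by the variational inequality, and `δ (1 - ⟪ν, ν'⟫) ≥ 0` since `‖ν‖, ‖ν'‖ ≤ 1`. -/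
theorem IsMetricProjection.inner_sub_unitNormal_nonneg (hP : IsMetricProjection X P)
    (z z' : E) : 0 ≤ ⟪z - z', unitNormal P z - unitNormal P z'⟫ := by
  set ν := unitNormal P z
  set ν' := unitNormal P z'
  have hνν' : ⟪ν, ν'⟫ ≤ 1 := (real_inner_le_norm _ _).trans <|
    mul_le_one₀ (norm_unitNormal_le_one P z) (norm_nonneg _) (norm_unitNormal_le_one P z')
  have hproj : ⟪ν, P z' - P z⟫ ≤ 0 := hP.inner_unitNormal_nonpos z ((hP z').1)
  have hproj' : ⟪ν', P z - P z'⟫ ≤ 0 := hP.inner_unitNormal_nonpos z' ((hP z).1)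
  have hz : ⟪ν', z - P z⟫ = ‖z - P z‖ * ⟪ν, ν'⟫ := by
    conv_lhs => rw [← norm_smul_unitNormal P z]
    rw [real_inner_smul_right, real_inner_comm]
  have hz' : ⟪ν, z' - P z'⟫ = ‖z' - P z'‖ * ⟪ν, ν'⟫ := by
    conv_lhs => rw [← norm_smul_unitNormal P z']
    rw [real_inner_smul_right]
  have hsplit : ⟪z - z', ν - ν'⟫ =
      (⟪ν, z - P z⟫ - ⟪ν', z - P z⟫) + (⟪ν', z' - P z'⟫ - ⟪ν, z' - P z'⟫)
        - ⟪ν, P z' - P z⟫ - ⟪ν', P z - P z'⟫ := by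
    simp only [inner_sub_right, real_inner_comm ν, real_inner_comm ν']
    ring
  rw [hsplit, hz, hz', inner_unitNormal_self, inner_unitNormal_self]
  nlinarith [mul_nonneg (norm_nonneg (z - P z)) (sub_nonneg.2 hνν'),
    mul_nonneg (norm_nonneg (z' - P z')) (sub_nonneg.2 hνν')]

theorem IsMetricProjection.antilipschitzWith_add_smul_unitNormal
    (hP : IsMetricProjection X P) {h : ℝ} (hh : 0 ≤ h) :
    AntilipschitzWith 1 fun z => z + h • unitNormal P z := by
  refine AntilipschitzWith.of_le_mul_dist fun z z' => ?_
  rw [NNReal.coe_one, one_mul, dist_eq_norm, dist_eq_norm]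
  have hexp : (z + h • unitNormal P z) - (z' + h • unitNormal P z')
      = (z - z') + h • (unitNormal P z - unitNormal P z') := by
    rw [smul_sub]; abel
  have hcross : 0 ≤ ⟪z - z', h • (unitNormal P z - unitNormal P z')⟫ := by
    rw [real_inner_smul_right]
    exact mul_nonneg hh (hP.inner_sub_unitNormal_nonneg z z')
  refine le_of_sq_le_sq ?_ (norm_nonneg _)
  rw [hexp, norm_add_sq_real]
  nlinarith [sq_nonneg ‖h • (unitNormal P z - unitNormal P z')‖]

theorem norm_unitNormal {P : E → E} {z : E} (hz : z ≠ P z) : ‖unitNormal P z‖ = 1 := by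
  rw [unitNormal, norm_smul, norm_inv, norm_norm]
  exact inv_mul_cancel₀ (norm_ne_zero_iff.2 (sub_ne_zero.2 hz))

theorem add_smul_unitNormal_mem_add_closedBall {Y : Set E} {z : E} (hz : z ∈ Y) {h : ℝ}
    (hh : 0 ≤ h) : z + h • unitNormal P z ∈ Y + closedBall 0 h := by
  refine add_mem_add hz (mem_closedBall_zero_iff.2 ?_)
  rw [norm_smul, Real.norm_of_nonneg hh]
  exact mul_le_of_le_one_right hh (norm_unitNormal_le_one P z)

/-- Pushing `z ∉ X` a distance `h` along its normal puts it at distance `‖z - P z‖ + h > h`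
from `X`, as measured by the supporting half-space at `P z`. -/
theorem IsMetricProjection.add_smul_unitNormal_notMem_add_closedBall
    (hP : IsMetricProjection X P) {z : E} (hz : z ∉ X) (h : ℝ) :
    z + h • unitNormal P z ∉ X + closedBall 0 h := by
  rintro ⟨x, hx, b, hb, hxb⟩
  have hzP : z ≠ P z := fun e => hz (e ▸ (hP z).1)
  set ν := unitNormal P z
  have hνν : ⟪ν, ν⟫ = 1 := by rw [real_inner_self_eq_norm_sq, norm_unitNormal hzP, one_pow]
  have hupper : ⟪ν, b⟫ ≤ h := (real_inner_le_norm _ _).trans <| by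
    rw [norm_unitNormal hzP, one_mul]
    exact mem_closedBall_zero_iff.1 hb
  have hb_eq : b = (z - P z) + (P z - x) + h • ν := by
    rw [← sub_eq_of_eq_add' hxb.symm]; abel
  have hproj : 0 ≤ ⟪ν, P z - x⟫ := by
    have := hP.inner_unitNormal_nonpos z hx
    rw [← neg_sub, inner_neg_right] at this
    linarith
  have hdist : 0 < ‖z - P z‖ := norm_pos_iff.2 (sub_ne_zero.2 hzP)
  rw [hb_eq, inner_add_right, inner_add_right, inner_unitNormal_self, real_inner_smul_right,
    hνν] at hupper
  linarith

end NearestPoint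

section Steiner

variable {E : Type*} [NormedAddCommGroup E] [InnerProductSpace ℝ E] [FiniteDimensional ℝ E]
  [MeasurableSpace E] [BorelSpace E] (μ : Measure E) [μ.IsAddHaarMeasure]

theorem addHaar_add_addHaar_add_closedBall_le {X Y : Set E} (hXconv : Convex ℝ X)
    (hXc : IsCompact X) (hXY : X ⊆ Y) {h : ℝ} (hh : 0 ≤ h) :
    μ Y + μ (X + closedBall 0 h) ≤ μ X + μ (Y + closedBall 0 h) := by
  rcases X.eq_empty_or_nonempty with rfl | hXn
  · simpa using measure_mono (subset_add_left Y (mem_closedBall_self hh))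
  obtain ⟨P, hP⟩ := exists_isMetricProjection hXn hXc.isComplete hXconv
  set T : E → E := fun z => z + h • unitNormal P z
  have hmaps : T '' (Y \ X) ⊆ (Y + closedBall 0 h) \ (X + closedBall 0 h) := by
    rintro _ ⟨z, hz, rfl⟩
    exact ⟨add_smul_unitNormal_mem_add_closedBall hz.1 hh,
      hP.add_smul_unitNormal_notMem_add_closedBall hz.2 h⟩
  have hdiff : μ (Y \ X) ≤ μ ((Y + closedBall 0 h) \ (X + closedBall 0 h)) := by
    have := μ.addHaar_le_mul_addHaar_image (hP.antilipschitzWith_add_smul_unitNormal hh) (Y \ X)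
    rw [ENNReal.coe_one, one_pow, one_mul] at this
    exact this.trans (measure_mono hmaps)
  have hXm : MeasurableSet X := hXc.isClosed.measurableSet
  have hXhm : MeasurableSet (X + closedBall 0 h) :=
    (hXc.add (isCompact_closedBall 0 h)).isClosed.measurableSet
  rw [← measure_inter_add_sdiff Y hXm, inter_eq_right.2 hXY,
    ← measure_inter_add_sdiff (Y + closedBall 0 h) hXhm,
    inter_eq_right.2 (add_subset_add_right hXY)]
  calc μ X + μ (Y \ X) + μ (X + closedBall 0 h)
      ≤ μ X + μ ((Y + closedBall 0 h) \ (X + closedBall 0 h)) + μ (X + closedBall 0 h) := by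
        gcongr
    _ = _ := by ring

theorem toReal_addHaar_add_closedBall_sub_le {X : Set E} (hXconv : Convex ℝ X) (hXc : IsCompact X)
    {c : E} {R h : ℝ} (hR : 0 ≤ R) (hh : 0 ≤ h) (hXR : X ⊆ closedBall c R) :
    (μ (X + closedBall 0 h)).toReal - (μ X).toReal ≤
      ((R + h) ^ finrank ℝ E - R ^ finrank ℝ E) * (μ (closedBall 0 1)).toReal := by
  have key := addHaar_add_addHaar_add_closedBall_le μ hXconv hXc hXR hh
  rw [closedBall_add_closedBall hR hh, add_zero, μ.addHaar_closedBall' c hR,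
    μ.addHaar_closedBall' c (add_nonneg hR hh)] at key
  have hX : μ X ≠ ⊤ := hXc.measure_lt_top.ne
  have hXh : μ (X + closedBall 0 h) ≠ ⊤ := (hXc.add (isCompact_closedBall 0 h)).measure_lt_top.ne
  have hB : μ (closedBall 0 1) ≠ ⊤ := (isCompact_closedBall 0 1).measure_lt_top.ne
  have := ENNReal.toReal_mono (by finiteness) key
  rw [ENNReal.toReal_add (by finiteness) hXh, ENNReal.toReal_add hX (by finiteness),
    ENNReal.toReal_mul, ENNReal.toReal_mul, ENNReal.toReal_ofReal (by positivity),
    ENNReal.toReal_ofReal (by positivity)] at this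
  linarith

end Steiner

section Minkowski

variable {E : Type*} [NormedAddCommGroup E] [NormedSpace ℝ E]

theorem smul_add_smul_subset_closedBall [ProperSpace E] {K₁ K₂ : Set E} {x₁ x₂ : E}
    {r₁ r₂ r s : ℝ} (hr₁ : 0 ≤ r₁) (hr₂ : 0 ≤ r₂) (hb₁ : K₁ ⊆ closedBall x₁ r₁)
    (hb₂ : K₂ ⊆ closedBall x₂ r₂) (hr : 0 ≤ r) (hs : 0 ≤ s) :
    r • K₁ + s • K₂ ⊆ closedBall (r • x₁ + s • x₂) (r * r₁ + s * r₂) :=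
  calc r • K₁ + s • K₂ ⊆ r • closedBall x₁ r₁ + s • closedBall x₂ r₂ :=
        add_subset_add (smul_set_mono hb₁) (smul_set_mono hb₂)
    _ = _ := by
      rw [smul_closedBall _ _ hr₁, smul_closedBall _ _ hr₂,
        closedBall_add_closedBall (by positivity) (by positivity),
        Real.norm_of_nonneg hr, Real.norm_of_nonneg hs]

theorem measure_add_smul_le_measure_add_smul_add_closedBall [MeasurableSpace E]
    (μ : Measure E) [μ.IsAddLeftInvariant] (A : Set E) {K : Set E} (hK : Convex ℝ K) {x : E}
    {ρ s t : ℝ} (hρ : 0 ≤ ρ) (hKρ : K ⊆ closedBall x ρ) (hs : 0 ≤ s) (hst : s ≤ t) :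
    μ (A + t • K) ≤ μ (A + s • K + closedBall 0 ((t - s) * ρ)) := by
  have hts : 0 ≤ t - s := sub_nonneg.2 hst
  have hK_ball : (t - s) • K ⊆ (t - s) • x +ᵥ closedBall (0 : E) ((t - s) * ρ) :=
    calc (t - s) • K ⊆ (t - s) • closedBall x ρ := smul_set_mono hKρ
      _ = _ := by rw [smul_closedBall _ _ hρ, Real.norm_of_nonneg hts, vadd_closedBall_zero]
  calc μ (A + t • K) = μ (A + s • K + (t - s) • K) := by
        rw [add_assoc, ← hK.add_smul hs hts, add_sub_cancel]
    _ ≤ μ ((t - s) • x +ᵥ (A + s • K + closedBall 0 ((t - s) * ρ))) := by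
        rw [← add_vadd_comm]
        exact measure_mono (add_subset_add_left hK_ball)
    _ = _ := measure_vadd _ _ _

end Minkowski

theorem add_mul_pow_sub_add_mul_pow_le {a b s t M : ℝ} (d : ℕ) (ha : 0 ≤ a) (hb : 0 ≤ b)
    (hM : ∀ i ∈ Finset.Icc 1 d, t ^ i - s ^ i ≤ M) :
    (a + t * b) ^ d - (a + s * b) ^ d ≤
      M * ∑ j ∈ Finset.range d, d.choose j * a ^ j * b ^ (d - j) := by
  have hexpand : ∀ u : ℝ, (a + u * b) ^ d =
      ∑ j ∈ Finset.range d, d.choose j * a ^ j * b ^ (d - j) * u ^ (d - j) + a ^ d := by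
    intro u
    rw [add_pow, Finset.sum_range_succ, Nat.sub_self, pow_zero, Nat.choose_self, Nat.cast_one,
      mul_one, mul_one]
    congr 1
    refine Finset.sum_congr rfl fun j _ => ?_
    ring
  rw [hexpand, hexpand, add_sub_add_right_eq_sub, ← Finset.sum_sub_distrib, Finset.mul_sum]
  refine Finset.sum_le_sum fun j hj => ?_
  have hdj : d - j ∈ Finset.Icc 1 d := by
    rw [Finset.mem_range] at hj
    rw [Finset.mem_Icc]
    omega
  rw [← mul_sub, mul_comm M]
  exact mul_le_mul_of_nonneg_left (hM _ hdj) (by positivity)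

theorem stmt_3_general (d : ℕ) (hd : 1 ≤ d)
    (K₁ K₂ : Set (EuclideanSpace ℝ (Fin d)))
    (hK₁conv : Convex ℝ K₁) (hK₂conv : Convex ℝ K₂)
    (hK₁c : IsCompact K₁) (hK₂c : IsCompact K₂)
    (x₁ x₂ : EuclideanSpace ℝ (Fin d)) (r₁ r₂ : ℝ) (hr₁ : 0 ≤ r₁) (hr₂ : 0 ≤ r₂)
    (hb₁ : K₁ ⊆ Metric.closedBall x₁ r₁) (hb₂ : K₂ ⊆ Metric.closedBall x₂ r₂)
    (r s t : ℝ) (hr : 0 ≤ r) (hs : 0 ≤ s) (hst : s ≤ t) :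
    (volume (r • K₁ + t • K₂)).toReal - (volume (r • K₁ + s • K₂)).toReal ≤
      ((Finset.Icc 1 d).sup' (Finset.nonempty_Icc.mpr hd) fun i => t ^ i - s ^ i) *
        ∑ j ∈ Finset.range d,
          (volume (Metric.closedBall (0 : EuclideanSpace ℝ (Fin d)) 1)).toReal *
            (d.choose j) * r ^ j * r₁ ^ j * r₂ ^ (d - j) := by
  set A := r • K₁ + s • K₂
  set κ := (volume (closedBall (0 : EuclideanSpace ℝ (Fin d)) 1)).toReal
  set M := (Finset.Icc 1 d).sup' (Finset.nonempty_Icc.mpr hd) fun i => t ^ i - s ^ i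
  have hAc : IsCompact A := (hK₁c.smul r).add (hK₂c.smul s)
  have hgrow := ENNReal.toReal_mono (hAc.add (isCompact_closedBall 0 _)).measure_lt_top.ne
    (measure_add_smul_le_measure_add_smul_add_closedBall volume (r • K₁) hK₂conv hr₂ hb₂ hs hst)
  have hsteiner := toReal_addHaar_add_closedBall_sub_le volume
    ((hK₁conv.smul r).add (hK₂conv.smul s)) hAc (by positivity)
    (mul_nonneg (sub_nonneg.2 hst) hr₂) (smul_add_smul_subset_closedBall hr₁ hr₂ hb₁ hb₂ hr hs)
  rw [finrank_euclideanSpace_fin, show r * r₁ + s * r₂ + (t - s) * r₂ = r * r₁ + t * r₂ by ring]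
    at hsteiner
  have harith := add_mul_pow_sub_add_mul_pow_le (s := s) (t := t) (M := M) d
    (mul_nonneg hr hr₁) hr₂ fun i hi => Finset.le_sup' (fun i => t ^ i - s ^ i) hi
  have hsum : M * ∑ j ∈ Finset.range d, κ * (d.choose j) * r ^ j * r₁ ^ j * r₂ ^ (d - j) =
      (M * ∑ j ∈ Finset.range d, d.choose j * (r * r₁) ^ j * r₂ ^ (d - j)) * κ := by
    rw [Finset.mul_sum, Finset.mul_sum, Finset.sum_mul]
    exact Finset.sum_congr rfl fun j _ => by ring
  rw [hsum]
  exact (sub_le_sub_right hgrow _).trans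
    (hsteiner.trans (mul_le_mul_of_nonneg_right harith ENNReal.toReal_nonneg))

theorem stmt_3 (d : ℕ) (hd : 1 ≤ d)
    (K₁ K₂ : Set (EuclideanSpace ℝ (Fin d)))
    (hK₁conv : Convex ℝ K₁) (hK₂conv : Convex ℝ K₂)
    (hK₁c : IsCompact K₁) (hK₂c : IsCompact K₂)
    (hK₁n : K₁.Nonempty) (hK₂n : K₂.Nonempty)
    (x₁ x₂ : EuclideanSpace ℝ (Fin d)) (r₁ r₂ : ℝ) (hr₁ : 0 ≤ r₁) (hr₂ : 0 ≤ r₂)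
    (hb₁ : K₁ ⊆ Metric.closedBall x₁ r₁) (hb₂ : K₂ ⊆ Metric.closedBall x₂ r₂)
    (r s t : ℝ) (hr : 0 ≤ r) (hs : 0 ≤ s) (hst : s ≤ t) :
    (volume (r • K₁ + t • K₂)).toReal - (volume (r • K₁ + s • K₂)).toReal ≤
      ((Finset.Icc 1 d).sup' (Finset.nonempty_Icc.mpr hd) fun i => t ^ i - s ^ i) *
        ∑ j ∈ Finset.range d,
          (volume (Metric.closedBall (0 : EuclideanSpace ℝ (Fin d)) 1)).toReal *
            (d.choose j) * r ^ j * r₁ ^ j * r₂ ^ (d - j) :=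
  stmt_3_general d hd K₁ K₂ hK₁conv hK₂conv hK₁c hK₂c x₁ x₂ r₁ r₂ hr₁ hr₂ hb₁ hb₂ r s t hr hs hst
end

section
/- Let $G = (V, E)$ be a graph whose vertex set $V$ carries a function $S : V \to \mathbb{R}$ such that: (a) each vertex $u$ has a unique 'earlier neighbour', i.e. exactly one neighbour $v$ with $S(v) \le S(u)$; and (b) for any edge $\{u, w\}$ where $w$ is not the earlier neighbour of $u$, one has $S(w) > S(u)$. Then every connected component of $G$ contains at most one doublet (an edge $\{u,v\}$ with $S(u) = S(v)$), and every finite connected component contains exactly one doublet. -/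
theorem stmt_8 {V : Type*} (G : SimpleGraph V) (S : V → ℝ)
    (hearlier : ∀ u : V, ∃! v : V, G.Adj u v ∧ S v ≤ S u) :
    (∀ u v u' v' : V, G.Adj u v → S u = S v → G.Adj u' v' → S u' = S v' →
        G.Reachable u u' → ({u, v} : Set V) = {u', v'}) ∧
    (∀ u : V, {w : V | G.Reachable u w}.Finite →
        ∃ v w : V, G.Reachable u v ∧ G.Adj v w ∧ S v = S w) := by
  choose f hP hU using hearlier
  have key : ∀ a b, G.Adj a b → S a ≤ S b → a = f b := fun a b hab h => hU b a ⟨hab.symm, h⟩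
  -- Main invariant: any vertex reachable from a doublet {u,v} is u, v, or has larger S.
  have main : ∀ u v : V, G.Adj u v → S u = S v → ∀ w, G.Reachable u w →
      w = u ∨ w = v ∨ S u < S w := by
    intro u v huv hS w hw
    have hfu : f u = v := (hU u v ⟨huv, hS.ge⟩).symm
    have hfv : f v = u := (hU v u ⟨huv.symm, hS.le⟩).symm
    have closure : ∀ a b, G.Adj a b → (∃ n, f^[n] a = u ∨ f^[n] a = v) →
        (∃ n, f^[n] b = u ∨ f^[n] b = v) := by
      intro a b hab ⟨n, hn⟩
      by_cases hle : S b ≤ S a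
      · have hb : b = f a := hU a b ⟨hab, hle⟩
        cases n with
        | zero =>
          simp only [Function.iterate_zero, id_eq] at hn
          refine ⟨0, ?_⟩
          rcases hn with h | h
          · right; simp [hb, h, hfu]
          · left; simp [hb, h, hfv]
        | succ m =>
          refine ⟨m, ?_⟩
          rw [hb, ← Function.iterate_succ_apply]
          exact hn
      · have ha : a = f b := key a b hab (le_of_not_ge hle)
        refine ⟨n + 1, ?_⟩
        rw [Function.iterate_succ_apply, ← ha]
        exact hn
    have trans : ∀ a w' (_ : G.Walk a w'), (∃ n, f^[n] a = u ∨ f^[n] a = v) →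
        (∃ n, f^[n] w' = u ∨ f^[n] w' = v) := by
      intro a w' p
      induction p with
      | nil => exact id
      | cons h _ ih => exact fun ha => ih (closure _ _ h ha)
    obtain ⟨p⟩ := hw
    have hchain : ∃ n, f^[n] w = u ∨ f^[n] w = v :=
      trans u w p ⟨0, Or.inl rfl⟩
    obtain ⟨n, hn⟩ := hchain
    clear trans closure p
    induction n generalizing w with
    | zero => simp only [Function.iterate_zero, id_eq] at hn; tauto
    | succ m ih =>
      rw [Function.iterate_succ_apply] at hn
      rcases ih (f w) hn with h | h | h
      · have hadj : G.Adj u w := h ▸ (hP w).1.symm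
        by_cases hle : S w ≤ S u
        · right; left
          have := hU u w ⟨hadj, hle⟩
          rw [this, hfu]
        · right; right; exact lt_of_not_ge hle
      · have hadj : G.Adj v w := h ▸ (hP w).1.symm
        by_cases hle : S w ≤ S v
        · left
          have := hU v w ⟨hadj, hle⟩
          rw [this, hfv]
        · right; right; rw [hS]; exact lt_of_not_ge hle
      · right; right
        have := (hP w).2
        linarith
  constructor
  · intro u v u' v' huv hSuv hu'v' hS' hreach
    have h1 := main u v huv hSuv u' hreach
    have h2 := main u v huv hSuv v' (hreach.trans hu'v'.reachable)
    have h3 := main u' v' hu'v' hS' u hreach.symm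
    have hu' : u' = u ∨ u' = v := by
      rcases h1 with h | h | h
      · exact Or.inl h
      · exact Or.inr h
      · exfalso
        rcases h3 with h' | h' | h'
        · rw [h'] at h; linarith
        · rw [h'] at h; linarith
        · linarith
    have hSu' : S u' = S u := by
      rcases hu' with h | h
      · rw [h]
      · rw [h, hSuv]
    have hv' : v' = u ∨ v' = v := by
      rcases h2 with h | h | h
      · exact Or.inl h
      · exact Or.inr h
      · exfalso; rw [← hS', hSu'] at h; linarith
    have hne : u' ≠ v' := hu'v'.ne
    rcases hu' with h | h <;> rcases hv' with h' | h'
    · exact absurd (h.trans h'.symm) hne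
    · rw [h, h']
    · rw [h, h']; exact Set.pair_comm u v
    · exact absurd (h.trans h'.symm) hne
  · intro u hfin
    have hne : ({w | G.Reachable u w}).Nonempty := ⟨u, SimpleGraph.Reachable.refl u⟩
    obtain ⟨x, hx, hmin⟩ := Set.exists_min_image _ S hfin hne
    exact ⟨x, f x, hx, (hP x).1,
      le_antisymm (hmin (f x) (hx.trans (hP x).1.reachable)) (hP x).2⟩
end

section
/- Let $u = (x,s,K)$ and $v = (y,t,L)$ be grains with $s \le t$, shapes $K, L$ convex bodies containing $0$ in their interior, and let $R : \{u, v\} \to (0, \infty)$ assign growth times such that the hard-core property holds: the interiors of $x + R(u)K$ and $y + R(v)L$ are disjoint, and moreover the grown grains are neighbours: $(x + R(u)K) \cap (y + R(v)L) \ne \emptyset$. Let $d(u,v)$ be the first contact time defined by $d(u,v) := s + a(x,K,y,\{0\})$ if $a(x,K,y,\{0\}) \le t - s$ and $d(u,v) := t + a(x + (t-s)K, K, y, L)$ otherwise. Then $\min(R(u)+s, R(v)+t) \le d(u,v) \le \max(R(u)+s, R(v)+t)$, and the second inequality is strict if $R(u)+s \ne R(v)+t$. -/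
open Pointwise

/-- The time at which a grain growing linearly from `x` (born at time 0) with
shape `K` first covers the point `y`. -/
noncomputable def coverTime {d : ℕ} (x : EuclideanSpace ℝ (Fin d))
    (K : Set (EuclideanSpace ℝ (Fin d))) (y : EuclideanSpace ℝ (Fin d)) : ℝ :=
  sInf {r : ℝ | 0 ≤ r ∧ y ∈ {x} + r • K}

/-- `growCollideTime A K B L` is `a(A,K,B,L) = inf {r ≥ 0 : (A + rK) ∩ (B + rL) ≠ ∅}`. -/
noncomputable def growCollideTime {d : ℕ} (A K B L : Set (EuclideanSpace ℝ (Fin d))) : ℝ :=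
  sInf {r : ℝ | 0 ≤ r ∧ ((A + r • K) ∩ (B + r • L)).Nonempty}

/-- The first contact time of the grains `(x,s,K)` and `(y,t,L)` (assuming `s ≤ t`). -/
noncomputable def firstContactTime {d : ℕ} (x : EuclideanSpace ℝ (Fin d))
    (s : ℝ) (K : Set (EuclideanSpace ℝ (Fin d))) (y : EuclideanSpace ℝ (Fin d))
    (t : ℝ) (L : Set (EuclideanSpace ℝ (Fin d))) : ℝ :=
  if coverTime x K y ≤ t - s then s + coverTime x K y
  else t + growCollideTime ({x} + (t - s) • K) K {y} L


lemma aux_smul_set_mono {d : ℕ} {K : Set (EuclideanSpace ℝ (Fin d))} (hK : Convex ℝ K)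
    (h0 : (0:EuclideanSpace ℝ (Fin d)) ∈ K) {a b : ℝ} (ha : 0 ≤ a) (hab : a ≤ b) :
    a • K ⊆ b • K := by
  rcases eq_or_lt_of_le (ha.trans hab) with hb | hb
  · have : a = 0 := le_antisymm (hab.trans hb.symm.le) ha
    subst this; rw [← hb]
  intro z hz
  rcases Set.mem_smul_set.1 hz with ⟨k, hk, rfl⟩
  refine Set.mem_smul_set.2 ⟨(a/b) • k, ?_, ?_⟩
  · have := hK h0 hk (a := 1 - a/b) (b := a/b) ?_ ?_ (by ring)
    · simpa using this
    · have : a / b ≤ 1 := div_le_one_of_le₀ hab hb.le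
      linarith
    · positivity
  · rw [smul_smul]; congr 1; field_simp

lemma aux_smul_set_subset_interior {d : ℕ} {K : Set (EuclideanSpace ℝ (Fin d))}
    (hK : Convex ℝ K) (h0 : (0:EuclideanSpace ℝ (Fin d)) ∈ interior K) {a b : ℝ}
    (ha : 0 ≤ a) (hab : a < b) :
    a • K ⊆ interior (b • K) := by
  have hb : 0 < b := ha.trans_lt hab
  rw [interior_smul₀ hb.ne' K]
  intro z hz
  rcases Set.mem_smul_set.1 hz with ⟨k, hk, rfl⟩
  refine Set.mem_smul_set.2 ⟨(a/b) • k, ?_, ?_⟩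
  · have h := hK.combo_interior_self_mem_interior (x := 0) (y := k) h0 hk
      (a := 1 - a/b) (b := a/b) ?_ ?_ (by ring)
    · simpa using h
    · have : a / b < 1 := (div_lt_one hb).2 hab
      linarith
    · positivity
  · rw [smul_smul]; congr 1; field_simp

lemma aux_singleton_add_interior {d : ℕ} {x : EuclideanSpace ℝ (Fin d)}
    {A : Set (EuclideanSpace ℝ (Fin d))} :
    {x} + interior A ⊆ interior ({x} + A) :=
  interior_maximal (Set.add_subset_add_left interior_subset)
    (IsOpen.add_left isOpen_interior)

lemma aux_mem_singleton_add {d : ℕ} {x p : EuclideanSpace ℝ (Fin d)}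
    {S : Set (EuclideanSpace ℝ (Fin d))} :
    p ∈ ({x} : Set (EuclideanSpace ℝ (Fin d))) + S ↔ p - x ∈ S := by
  constructor
  · rintro ⟨u, hu, v, hv, rfl⟩
    rcases hu with rfl
    simpa using hv
  · intro h
    exact ⟨x, rfl, p - x, h, by show x + (p - x) = p; abel⟩

set_option maxHeartbeats 2000000 in
/-- Lemma 2.1: the first contact time of two neighbouring grains of a hard-core
configuration lies between the two stopping times, the upper inequality being
strict when the stopping times differ. -/
theorem stmt_13 (d : ℕ) (x y : EuclideanSpace ℝ (Fin d)) (s t : ℝ)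
    (hs : 0 ≤ s) (hst : s ≤ t)
    (K L : Set (EuclideanSpace ℝ (Fin d)))
    (hKconv : Convex ℝ K) (hLconv : Convex ℝ L)
    (hKc : IsCompact K) (hLc : IsCompact L)
    (hK0 : 0 ∈ interior K) (hL0 : 0 ∈ interior L)
    (Ru Rv : ℝ) (hRu : 0 < Ru) (hRv : 0 < Rv)
    (hardcore : interior ({x} + Ru • K) ∩ interior ({y} + Rv • L) = ∅)
    (neighbours : (({x} + Ru • K) ∩ ({y} + Rv • L)).Nonempty) :
    min (Ru + s) (Rv + t) ≤ firstContactTime x s K y t L ∧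
    firstContactTime x s K y t L ≤ max (Ru + s) (Rv + t) ∧
    (Ru + s ≠ Rv + t → firstContactTime x s K y t L < max (Ru + s) (Rv + t)) := by
  obtain ⟨z, hzK, hzL⟩ := neighbours
  have hK0' : (0:EuclideanSpace ℝ (Fin d)) ∈ K := interior_subset hK0
  have hL0' : (0:EuclideanSpace ℝ (Fin d)) ∈ L := interior_subset hL0
  obtain ⟨ρK, hρK, hballK⟩ : ∃ ε > 0, Metric.ball (0:EuclideanSpace ℝ (Fin d)) ε ⊆ K :=
    Metric.mem_nhds_iff.1 (mem_interior_iff_mem_nhds.1 hK0)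
  obtain ⟨ρL, hρL, hballL⟩ : ∃ ε > 0, Metric.ball (0:EuclideanSpace ℝ (Fin d)) ε ⊆ L :=
    Metric.mem_nhds_iff.1 (mem_interior_iff_mem_nhds.1 hL0)
  have hts : (0:ℝ) ≤ t - s := by linarith
  -- the key hard-core contradiction
  have key : ∀ (p : EuclideanSpace ℝ (Fin d)) (a b : ℝ), 0 ≤ a → a < Ru → 0 ≤ b → b < Rv →
      p ∈ ({x} : Set _) + a • K → p ∈ ({y} : Set _) + b • L → False := by
    intro p a b ha haR hb hbR hpK hpL
    have h1 : p ∈ interior ({x} + Ru • K) := by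
      apply aux_singleton_add_interior
      exact aux_mem_singleton_add.2 (aux_smul_set_subset_interior hKconv hK0 ha haR
        (aux_mem_singleton_add.1 hpK))
    have h2 : p ∈ interior ({y} + Rv • L) := by
      apply aux_singleton_add_interior
      exact aux_mem_singleton_add.2 (aux_smul_set_subset_interior hLconv hL0 hb hbR
        (aux_mem_singleton_add.1 hpL))
    exact absurd hardcore (by rw [Set.eq_empty_iff_forall_notMem]; push_neg; exact ⟨p, h1, h2⟩)
  -- rewriting the growing set
  have setEq : ∀ r : ℝ, 0 ≤ r →
      (({x} : Set _) + (t - s) • K) + r • K = ({x} : Set _) + (t - s + r) • K := by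
    intro r hr
    rw [add_assoc, ← hKconv.add_smul hts hr]
  set M := max (Ru + s) (Rv + t) with hMdef
  have hM1 : Ru + s ≤ M := le_max_left _ _
  have hM2 : Rv + t ≤ M := le_max_right _ _
  set cSet := {r : ℝ | 0 ≤ r ∧ ((({x} : Set _) + (t - s) • K + r • K) ∩
      (({y} : Set _) + r • L)).Nonempty} with hcSet
  have hgc : growCollideTime ({x} + (t - s) • K) K {y} L = sInf cSet := rfl
  have hbddc : BddBelow cSet := ⟨0, fun r hr => hr.1⟩
  have hMt : (0:ℝ) ≤ M - t := by linarith
  have hMmem : M - t ∈ cSet := by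
    refine ⟨hMt, z, ?_, ?_⟩
    · rw [setEq _ hMt]
      refine Set.add_subset_add_left (aux_smul_set_mono hKconv hK0' hRu.le (by linarith)) hzK
    · exact Set.add_subset_add_left (aux_smul_set_mono hLconv hL0' hRv.le (by linarith)) hzL
  by_cases hc : coverTime x K y ≤ t - s
  · -- early contact case
    have hD : firstContactTime x s K y t L = s + coverTime x K y := by
      unfold firstContactTime; rw [if_pos hc]
    have hcover : min (Ru + s) (Rv + t) - s ≤ coverTime x K y := by
      apply le_csInf
      · refine ⟨‖y - x‖ / ρK + 1, by positivity, ?_⟩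
        apply aux_mem_singleton_add.2
        refine Set.mem_smul_set.2 ⟨(‖y - x‖ / ρK + 1)⁻¹ • (y - x), hballK ?_, ?_⟩
        · rw [Metric.mem_ball, dist_zero_right, norm_smul, Real.norm_eq_abs,
            abs_of_nonneg (by positivity)]
          rw [inv_mul_lt_iff₀ (by positivity)]
          have hcancel : ‖y - x‖ / ρK * ρK = ‖y - x‖ := div_mul_cancel₀ _ hρK.ne'
          nlinarith [norm_nonneg (y - x)]
        · rw [smul_smul, mul_inv_cancel₀ (by positivity), one_smul]
      · rintro r ⟨hr0, hry⟩
        by_contra h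
        push_neg at h
        have hrRu : r < Ru := by
          have := min_le_left (Ru + s) (Rv + t); linarith
        refine key y r 0 hr0 hrRu le_rfl hRv hry ?_
        exact aux_mem_singleton_add.2 (by
          refine Set.mem_smul_set.2 ⟨0, hL0', by simp⟩)
    refine ⟨by linarith, by linarith, fun _ => by linarith⟩
  · -- late contact case
    have hD : firstContactTime x s K y t L =
        t + growCollideTime ({x} + (t - s) • K) K {y} L := by
      unfold firstContactTime; rw [if_neg hc]
    rw [hD, hgc]
    have hupper : sInf cSet ≤ M - t := csInf_le hbddc hMmem
    have hlower : min (Ru + s) (Rv + t) - t ≤ sInf cSet := by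
      apply le_csInf ⟨M - t, hMmem⟩
      rintro r ⟨hr0, p, hp1, hp2⟩
      by_contra h
      push_neg at h
      have hmin1 := min_le_left (Ru + s) (Rv + t)
      have hmin2 := min_le_right (Ru + s) (Rv + t)
      rw [setEq r hr0] at hp1
      exact key p (t - s + r) r (by linarith) (by linarith) hr0 (by linarith) hp1 hp2
    refine ⟨by linarith, by linarith, ?_⟩
    intro hne
    -- strictness: exhibit an element of cSet strictly below M - t
    suffices h : ∃ r ∈ cSet, r < M - t by
      obtain ⟨r, hrmem, hrlt⟩ := h
      have := csInf_le hbddc hrmem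
      linarith
    rcases lt_or_gt_of_ne hne with h12 | h21
    · -- Ru + s < Rv + t, M = Rv + t
      have hMeq : M = Rv + t := max_eq_right h12.le
      rcases Set.mem_smul_set.1 (aux_mem_singleton_add.1 hzK) with ⟨k, hk, hzk⟩
      rcases Set.mem_smul_set.1 (aux_mem_singleton_add.1 hzL) with ⟨l, hl, hzl⟩
      set δ0 := Rv + t - (Ru + s) with hδ0
      have hδ0pos : 0 < δ0 := by linarith
      set ε := min (min (δ0 / 2) (Rv / 2)) (δ0 / 2 * ρK / (‖l‖ + 1)) with hεdef
      have hε0 : 0 < ε := by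
        apply lt_min (lt_min (by linarith) (by linarith))
        exact div_pos (mul_pos (by linarith) hρK) (by positivity)
      have hε1 : ε ≤ δ0 / 2 := le_trans (min_le_left _ _) (min_le_left _ _)
      have hε2 : ε ≤ Rv / 2 := le_trans (min_le_left _ _) (min_le_right _ _)
      have hε3 : ε ≤ δ0 / 2 * ρK / (‖l‖ + 1) := min_le_right _ _
      set δ := δ0 - ε with hδdef
      have hδpos : 0 < δ := by linarith
      refine ⟨Rv - ε, ⟨by linarith, ?_⟩, by rw [hMeq]; linarith⟩
      refine ⟨y + (Rv - ε) • l, ?_, ?_⟩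
      · rw [setEq _ (by linarith)]
        apply aux_mem_singleton_add.2
        have hid : y + (Rv - ε) • l - x = Ru • k - ε • l := by
          rw [sub_smul, hzk, hzl]; abel
        rw [hid]
        have harith : t - s + (Rv - ε) = Ru + δ := by rw [hδdef, hδ0]; ring
        rw [harith, hKconv.add_smul hRu.le hδpos.le]
        have hw : δ • ((-(ε / δ)) • l) = -(ε • l) := by
          rw [smul_smul, show δ * (-(ε / δ)) = -ε by field_simp [mul_comm], neg_smul]
        have : Ru • k - ε • l = Ru • k + δ • ((-(ε / δ)) • l) := by
          rw [hw]; abel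
        rw [this]
        refine Set.add_mem_add (Set.smul_mem_smul_set hk) (Set.smul_mem_smul_set ?_)
        apply hballK
        rw [Metric.mem_ball, dist_zero_right, norm_smul, Real.norm_eq_abs, abs_neg,
          abs_of_nonneg (by positivity)]
        rw [div_mul_eq_mul_div, div_lt_iff₀ hδpos]
        have hεl : ε * (‖l‖ + 1) ≤ δ0 / 2 * ρK := by
          rw [← le_div_iff₀ (by positivity)]; exact hε3
        nlinarith [norm_nonneg l]
      · apply aux_mem_singleton_add.2
        have h' : y + (Rv - ε) • l - y = (Rv - ε) • l := by abel
        rw [h']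
        exact Set.smul_mem_smul_set hl
    · -- Rv + t < Ru + s, M = Ru + s
      have hMeq : M = Ru + s := max_eq_left h21.le
      rcases Set.mem_smul_set.1 (aux_mem_singleton_add.1 hzK) with ⟨k, hk, hzk⟩
      rcases Set.mem_smul_set.1 (aux_mem_singleton_add.1 hzL) with ⟨l, hl, hzl⟩
      set δ0 := Ru + s - (Rv + t) with hδ0
      have hδ0pos : 0 < δ0 := by linarith
      set ε := min (min (δ0 / 2) (Ru / 2)) (δ0 / 2 * ρL / (‖k‖ + 1)) with hεdef
      have hε0 : 0 < ε := by
        apply lt_min (lt_min (by linarith) (by linarith))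
        exact div_pos (mul_pos (by linarith) hρL) (by positivity)
      have hε1 : ε ≤ δ0 / 2 := le_trans (min_le_left _ _) (min_le_left _ _)
      have hε2 : ε ≤ Ru / 2 := le_trans (min_le_left _ _) (min_le_right _ _)
      have hε3 : ε ≤ δ0 / 2 * ρL / (‖k‖ + 1) := min_le_right _ _
      set δ := δ0 - ε with hδdef
      have hδpos : 0 < δ := by linarith
      refine ⟨Ru + s - t - ε, ⟨by linarith, ?_⟩, by rw [hMeq]; linarith⟩
      refine ⟨x + (Ru - ε) • k, ?_, ?_⟩
      · rw [setEq _ (by linarith)]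
        apply aux_mem_singleton_add.2
        have harith : t - s + (Ru + s - t - ε) = Ru - ε := by ring
        rw [harith]
        have h' : x + (Ru - ε) • k - x = (Ru - ε) • k := by abel
        rw [h']
        exact Set.smul_mem_smul_set hk
      · apply aux_mem_singleton_add.2
        have hid : x + (Ru - ε) • k - y = Rv • l - ε • k := by
          rw [sub_smul, hzk, hzl]; abel
        rw [hid]
        have harith : Ru + s - t - ε = Rv + δ := by rw [hδdef, hδ0]; ring
        rw [harith, hLconv.add_smul hRv.le hδpos.le]
        have hw : δ • ((-(ε / δ)) • k) = -(ε • k) := by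
          rw [smul_smul, show δ * (-(ε / δ)) = -ε by field_simp [mul_comm], neg_smul]
        have : Rv • l - ε • k = Rv • l + δ • ((-(ε / δ)) • k) := by
          rw [hw]; abel
        rw [this]
        refine Set.add_mem_add (Set.smul_mem_smul_set hl) (Set.smul_mem_smul_set ?_)
        apply hballL
        rw [Metric.mem_ball, dist_zero_right, norm_smul, Real.norm_eq_abs, abs_neg,
          abs_of_nonneg (by positivity)]
        rw [div_mul_eq_mul_div, div_lt_iff₀ hδpos]
        have hεk : ε * (‖k‖ + 1) ≤ δ0 / 2 * ρL := by
          rw [← le_div_iff₀ (by positivity)]; exact hε3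
        nlinarith [norm_nonneg k]
end
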